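/- arXiv:2305.00413 — 3 statements merged into one kernel-verified Lean document; each statement's English description precedes it below -/
import Mathlib

section
/- Let S be a Boolean sublattice all of whose quarks have size exactly 2. If S is an HFS, then: (1) the pairing graph G_p(S) contains no path of length 5; (2) if a connected component C of G_p(S) contains a cycle of length 3, then C is the cycle graph C₃ (it has exactly 3 vertices and its edges form a 3-cycle); (3) if a connected component C of G_p(S) contains a cycle of length 5, then C is the cycle graph C₅ (it has exactly 5 vertices and its edges form a 5-cycle). -/
open scoped ENNReal

/-- A Boolean sublattice: a set of finite subsets of `ℕ` that contains `∅` and is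
closed under binary unions (ordered by inclusion, with joins given by unions). -/
def IsBSL (S : Set (Finset ℕ)) : Prop :=
  ∅ ∈ S ∧ ∀ A ∈ S, ∀ B ∈ S, A ∪ B ∈ S

/-- A quark of `S`: a nonempty element of `S` covering `∅` in `S`, i.e. there is no
`B ∈ S` with `∅ ⊊ B ⊊ A`. -/
def IsQuark (S : Set (Finset ℕ)) (A : Finset ℕ) : Prop :=
  A ∈ S ∧ A ≠ ∅ ∧ ∀ B ∈ S, B ≠ ∅ → ¬ B ⊂ A

/-- `z` is a factorization of `X` into quarks of `S`: a finite set of quarks whose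
union is `X` such that no proper subset of `z` has union `X`. -/
def IsFactorization (S : Set (Finset ℕ)) (X : Finset ℕ) (z : Finset (Finset ℕ)) : Prop :=
  (∀ A ∈ z, IsQuark S A) ∧ z.sup id = X ∧ ∀ w, w ⊂ z → w.sup id ≠ X

/-- The set `Z(X)` of factorizations of `X` in `S`. -/
def Factorizations (S : Set (Finset ℕ)) (X : Finset ℕ) : Set (Finset (Finset ℕ)) :=
  {z | IsFactorization S X z}

/-- `S` is factorizable: every nonempty element of `S` has a factorization. -/
def Factorizable (S : Set (Finset ℕ)) : Prop :=
  ∀ X ∈ S, X ≠ ∅ → (Factorizations S X).Nonempty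

/-- `S` is a unique factorization semilattice: every nonempty element of `S` has
exactly one factorization. -/
def IsUFS (S : Set (Finset ℕ)) : Prop :=
  ∀ X ∈ S, X ≠ ∅ → ∃! z, z ∈ Factorizations S X

/-- `S` is a half-factorial semilattice: for every nonempty `X ∈ S` the set of
factorization lengths of `X` is a singleton. -/
def IsHFS (S : Set (Finset ℕ)) : Prop :=
  ∀ X ∈ S, X ≠ ∅ → (Factorizations S X).Nonempty ∧
    ∀ z ∈ Factorizations S X, ∀ z' ∈ Factorizations S X, z.card = z'.card

/-- `S` is a length-factorial semilattice: two distinct factorizations of the same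
nonempty element of `S` have different cardinalities. -/
def IsLFS (S : Set (Finset ℕ)) : Prop :=
  ∀ X ∈ S, X ≠ ∅ → ∀ z ∈ Factorizations S X, ∀ z' ∈ Factorizations S X,
    z.card = z'.card → z = z'

/-- The Boolean sublattice generated by a collection `𝒜` of finite subsets of `ℕ`:
the smallest set of finite subsets of `ℕ` containing `{∅} ∪ 𝒜` and closed under
binary unions. -/
def genBSL (𝒜 : Set (Finset ℕ)) : Set (Finset ℕ) :=
  ⋂₀ {T | IsBSL T ∧ 𝒜 ⊆ T}

/-- An isolated quark: a quark disjoint from every other quark of `S`. -/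
def IsIsolatedQuark (S : Set (Finset ℕ)) (A : Finset ℕ) : Prop :=
  IsQuark S A ∧ ∀ B, IsQuark S B → B ≠ A → Disjoint A B

/-- An excess quark: a quark each of whose elements belongs to some other quark. -/
def IsExcessQuark (S : Set (Finset ℕ)) (A : Finset ℕ) : Prop :=
  IsQuark S A ∧ ∀ j ∈ A, ∃ B, IsQuark S B ∧ B ≠ A ∧ j ∈ B

/-- The quarkic graph of `S`: vertices are the quarks of `S`, with an edge between
distinct quarks having nonempty intersection. -/
def quarkicGraph (S : Set (Finset ℕ)) : SimpleGraph {A : Finset ℕ // IsQuark S A} :=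
  SimpleGraph.fromRel (fun A B => ((A : Finset ℕ) ∩ (B : Finset ℕ)).Nonempty)

/-- The vertex set `V(C)` of a connected component of the quarkic graph, as a set of
finite subsets of `ℕ`. -/
def compVerts (S : Set (Finset ℕ)) (C : (quarkicGraph S).ConnectedComponent) :
    Set (Finset ℕ) :=
  Subtype.val '' C.supp

/-- The pairing graph of `S` (for `S` with quarks of size at most 2): vertices are `ℕ`,
with an edge between distinct `a`, `b` whenever `{a, b}` is a quark of `S`. -/
def pairingGraph (S : Set (Finset ℕ)) : SimpleGraph ℕ :=
  SimpleGraph.fromRel (fun a b => IsQuark S {a, b})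

/-- The edge set of a connected component `C` of the pairing graph, each edge `{a,b}`
regarded as the 2-element subset `{a, b}` of `ℕ`. -/
def compEdgeSets (S : Set (Finset ℕ)) (C : (pairingGraph S).ConnectedComponent) :
    Set (Finset ℕ) :=
  {A | ∃ a b : ℕ, (pairingGraph S).Adj a b ∧ a ∈ C.supp ∧ A = {a, b}}

/-- `v` has degree at least `n` in `G` (valid also for infinite graphs). -/
def DegAtLeast {V : Type*} (G : SimpleGraph V) (v : V) (n : ℕ) : Prop :=
  ∃ s : Finset V, s.card = n ∧ ∀ u ∈ s, G.Adj v u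

/-- `v` has degree exactly `n` in `G`: its neighbor set is a finite set of size `n`. -/
def DegExactly {V : Type*} (G : SimpleGraph V) (v : V) (n : ℕ) : Prop :=
  ∃ s : Finset V, s.card = n ∧ ∀ u, G.Adj v u ↔ u ∈ s

/-- A leaf: a vertex of degree exactly 1. -/
def IsLeaf {V : Type*} (G : SimpleGraph V) (v : V) : Prop := DegExactly G v 1

/-- A candy graph: a connected simple graph of diameter at most 4 that contains a
cycle of length `k` if and only if `k = 4`. -/
def IsCandy {V : Type*} (G : SimpleGraph V) : Prop :=
  G.Connected ∧
  (∀ u v : V, ∃ p : G.Walk u v, p.length ≤ 4) ∧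
  (∀ k : ℕ, (∃ (v : V) (c : G.Walk v v), c.IsCycle ∧ c.length = k) ↔ k = 4)

/-- The connected component `C` of `G` contains no cycle. -/
def CompAcyclic {V : Type*} (G : SimpleGraph V) (C : G.ConnectedComponent) : Prop :=
  ∀ v ∈ C.supp, ∀ c : G.Walk v v, ¬ c.IsCycle

/-- Every path inside the connected component `C` has length at most `d` (for a tree
component this says its diameter is at most `d`). -/
def CompDiamLe {V : Type*} (G : SimpleGraph V) (C : G.ConnectedComponent) (d : ℕ) : Prop :=
  ∀ (u v : V), u ∈ C.supp → ∀ p : G.Walk u v, p.IsPath → p.length ≤ d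

/-- The connected component `C` of `G` is (as an induced subgraph) the cycle graph on
`n` vertices. -/
def CompIsCycleGraph {V : Type*} (G : SimpleGraph V) (C : G.ConnectedComponent)
    (n : ℕ) : Prop :=
  ∃ v : Fin n → V, Function.Injective v ∧ C.supp = Set.range v ∧
    ∀ i j : Fin n, G.Adj (v i) (v j) ↔
      ((j : ℕ) = ((i : ℕ) + 1) % n ∨ (i : ℕ) = ((j : ℕ) + 1) % n)

/-- The connected component `C` of `G` is (as an induced subgraph) a candy graph:
it has diameter at most 4 and contains a cycle of length `k` iff `k = 4`. -/
def CompIsCandy {V : Type*} (G : SimpleGraph V) (C : G.ConnectedComponent) : Prop :=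
  (∀ u v, u ∈ C.supp → v ∈ C.supp → ∃ p : G.Walk u v, p.length ≤ 4) ∧
  (∀ k : ℕ, (∃ v ∈ C.supp, ∃ c : G.Walk v v, c.IsCycle ∧ c.length = k) ↔ k = 4)

/-- The set of factorization lengths `L(X)` of `X` in `S`. -/
def lengthsOf (S : Set (Finset ℕ)) (X : Finset ℕ) : Set ℕ :=
  Finset.card '' Factorizations S X

/-- The elasticity `ρ(X) = sup L(X) / min L(X)` of a nonempty element `X` of `S`,
valued in the extended nonnegative reals. -/
noncomputable def elasticityOf (S : Set (Finset ℕ)) (X : Finset ℕ) : ℝ≥0∞ :=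
  (⨆ n ∈ lengthsOf S X, (n : ℝ≥0∞)) / ((sInf (lengthsOf S X) : ℕ) : ℝ≥0∞)

/-- The elasticity `ρ(S)` of a Boolean sublattice `S`. -/
noncomputable def elasticity (S : Set (Finset ℕ)) : ℝ≥0∞ :=
  ⨆ X ∈ {X | X ∈ S ∧ X ≠ ∅}, elasticityOf S X

lemma pair_ne {a b c d : ℕ} (h1 : a ≠ c) (h2 : a ≠ d) :
    ({a,b} : Finset ℕ) ≠ ({c,d} : Finset ℕ) := by
  intro h
  have : a ∈ ({c,d} : Finset ℕ) := h ▸ Finset.mem_insert_self a {b}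
  simp at this; tauto

lemma mkFact {S : Set (Finset ℕ)} {X : Finset ℕ} {z : Finset (Finset ℕ)}
    (hq : ∀ A ∈ z, IsQuark S A) (hsup : z.sup id = X)
    (hmin : ∀ A ∈ z, ∃ x ∈ A, ∀ B ∈ z, x ∈ B → B = A) :
    IsFactorization S X z := by
  refine ⟨hq, hsup, ?_⟩
  intro w hw hwX
  obtain ⟨A, hAz, hAw⟩ := Finset.exists_of_ssubset hw
  obtain ⟨x, hxA, hpriv⟩ := hmin A hAz
  have hxX : x ∈ X := hsup ▸ (Finset.le_sup (f := id) hAz) hxA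
  have hxw : x ∈ w.sup id := hwX ▸ hxX
  rw [Finset.mem_sup] at hxw
  obtain ⟨B, hBw, hxB⟩ := hxw
  exact hAw (hpriv B (hw.subset hBw) hxB ▸ hBw)

lemma pair_ne' {a b c d : ℕ} (h : b ≠ c) (h2 : b ≠ d) :
    ({a,b} : Finset ℕ) ≠ ({c,d} : Finset ℕ) := by
  intro he
  have : b ∈ ({c,d} : Finset ℕ) := he ▸ (by simp : b ∈ ({a,b}:Finset ℕ))
  simp at this; tauto

lemma lemB {S : Set (Finset ℕ)} (hS : IsBSL S) (hhfs : IsHFS S)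
    {x p q r : ℕ}
    (hxp : IsQuark S {x,p}) (hxq : IsQuark S {x,q}) (hxr : IsQuark S {x,r})
    (hpq : IsQuark S {p,q})
    (h1 : x ≠ p) (h2 : x ≠ q) (h3 : x ≠ r) (h4 : p ≠ q) (h5 : p ≠ r) (h6 : q ≠ r) :
    False := by
  set X : Finset ℕ := {x,p,q,r} with hXdef
  have hXS : X ∈ S := by
    have h := hS.2 _ (hS.2 _ hxp.1 _ hxq.1) _ hxr.1
    have e : ({x,p} ∪ {x,q} : Finset ℕ) ∪ {x,r} = X := by
      ext t; simp [hXdef]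
      try tauto
    rwa [e] at h
  have hXne : X ≠ ∅ := by
    intro h; have : x ∈ X := by simp [hXdef]
    simp [h] at this
  have hz1 : ({({p,q} : Finset ℕ), {x,r}} : Finset (Finset ℕ)) ∈ Factorizations S X := by
    refine mkFact ?_ ?_ ?_
    · intro A hA; simp only [Finset.mem_insert, Finset.mem_singleton] at hA
      rcases hA with rfl | rfl
      exacts [hpq, hxr]
    · ext t; simp [hXdef]
      try tauto
    · intro A hA; simp only [Finset.mem_insert, Finset.mem_singleton] at hA
      rcases hA with rfl | rfl
      · refine ⟨p, by simp, ?_⟩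
        intro B hB hpB
        simp only [Finset.mem_insert, Finset.mem_singleton] at hB
        rcases hB with rfl | rfl
        · rfl
        · simp at hpB; omega
      · refine ⟨r, by simp, ?_⟩
        intro B hB hrB
        simp only [Finset.mem_insert, Finset.mem_singleton] at hB
        rcases hB with rfl | rfl
        · simp at hrB; omega
        · rfl
  have hz2 : ({({x,p} : Finset ℕ), {x,q}, {x,r}} : Finset (Finset ℕ)) ∈ Factorizations S X := by
    refine mkFact ?_ ?_ ?_
    · intro A hA; simp only [Finset.mem_insert, Finset.mem_singleton] at hA
      rcases hA with rfl | rfl | rfl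
      exacts [hxp, hxq, hxr]
    · ext t; simp [hXdef]
      try tauto
    · intro A hA; simp only [Finset.mem_insert, Finset.mem_singleton] at hA
      rcases hA with rfl | rfl | rfl
      · refine ⟨p, by simp, ?_⟩
        intro B hB hpB
        simp only [Finset.mem_insert, Finset.mem_singleton] at hB
        rcases hB with rfl | rfl | rfl
        · rfl
        · simp at hpB; omega
        · simp at hpB; omega
      · refine ⟨q, by simp, ?_⟩
        intro B hB hpB
        simp only [Finset.mem_insert, Finset.mem_singleton] at hB
        rcases hB with rfl | rfl | rfl
        · simp at hpB; omega
        · rfl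
        · simp at hpB; omega
      · refine ⟨r, by simp, ?_⟩
        intro B hB hpB
        simp only [Finset.mem_insert, Finset.mem_singleton] at hB
        rcases hB with rfl | rfl | rfl
        · simp at hpB; omega
        · simp at hpB; omega
        · rfl
  have hcard := (hhfs X hXS hXne).2 _ hz1 _ hz2
  have c1 : ({({p,q} : Finset ℕ), {x,r}} : Finset (Finset ℕ)).card = 2 := by
    rw [Finset.card_insert_of_notMem (by simpa using pair_ne (Ne.symm h1) h5), Finset.card_singleton]
  have c2 : ({({x,p} : Finset ℕ), {x,q}, {x,r}} : Finset (Finset ℕ)).card = 3 := by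
    have n1 : ({x,p} : Finset ℕ) ∉ ({({x,q} : Finset ℕ), {x,r}} : Finset (Finset ℕ)) := by
      simp only [Finset.mem_insert, Finset.mem_singleton]
      exact not_or.mpr ⟨pair_ne' (Ne.symm h1) h4, pair_ne' (Ne.symm h1) h5⟩
    have n2 : ({x,q} : Finset ℕ) ∉ ({({x,r} : Finset ℕ)} : Finset (Finset ℕ)) := by
      simpa using pair_ne' (Ne.symm h2) h6
    rw [Finset.card_insert_of_notMem n1, Finset.card_insert_of_notMem n2,
      Finset.card_singleton]
  rw [c1, c2] at hcard
  omega

set_option maxHeartbeats 1600000 in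
lemma lemA {S : Set (Finset ℕ)} (hS : IsBSL S) (hhfs : IsHFS S)
    {a0 a1 a2 a3 a4 a5 : ℕ}
    (q01 : IsQuark S {a0,a1}) (q12 : IsQuark S {a1,a2}) (q23 : IsQuark S {a2,a3})
    (q34 : IsQuark S {a3,a4}) (q45 : IsQuark S {a4,a5})
    (h01 : a0 ≠ a1) (h02 : a0 ≠ a2) (h03 : a0 ≠ a3) (h04 : a0 ≠ a4) (h05 : a0 ≠ a5)
    (h12 : a1 ≠ a2) (h13 : a1 ≠ a3) (h14 : a1 ≠ a4) (h15 : a1 ≠ a5)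
    (h23 : a2 ≠ a3) (h24 : a2 ≠ a4) (h25 : a2 ≠ a5)
    (h34 : a3 ≠ a4) (h35 : a3 ≠ a5) (h45 : a4 ≠ a5) :
    False := by
  set X : Finset ℕ := {a0,a1,a2,a3,a4,a5} with hXdef
  have hXS : X ∈ S := by
    have h := hS.2 _ (hS.2 _ q01.1 _ q23.1) _ q45.1
    have e : ({a0,a1} ∪ {a2,a3} : Finset ℕ) ∪ {a4,a5} = X := by
      ext t; simp [hXdef]
      try tauto
    rwa [e] at h
  have hXne : X ≠ ∅ := by
    intro h; have : a0 ∈ X := by simp [hXdef]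
    simp [h] at this
  have hz1 : ({({a0,a1} : Finset ℕ), {a2,a3}, {a4,a5}} : Finset (Finset ℕ))
      ∈ Factorizations S X := by
    refine mkFact ?_ ?_ ?_
    · intro A hA; simp only [Finset.mem_insert, Finset.mem_singleton] at hA
      rcases hA with rfl | rfl | rfl
      exacts [q01, q23, q45]
    · ext t; simp [hXdef]
      try tauto
    · intro A hA; simp only [Finset.mem_insert, Finset.mem_singleton] at hA
      rcases hA with rfl | rfl | rfl
      · refine ⟨a0, by simp, ?_⟩
        intro B hB hm
        simp only [Finset.mem_insert, Finset.mem_singleton] at hB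
        rcases hB with rfl | rfl | rfl
        · rfl
        · simp at hm; omega
        · simp at hm; omega
      · refine ⟨a2, by simp, ?_⟩
        intro B hB hm
        simp only [Finset.mem_insert, Finset.mem_singleton] at hB
        rcases hB with rfl | rfl | rfl
        · simp at hm; omega
        · rfl
        · simp at hm; omega
      · refine ⟨a4, by simp, ?_⟩
        intro B hB hm
        simp only [Finset.mem_insert, Finset.mem_singleton] at hB
        rcases hB with rfl | rfl | rfl
        · simp at hm; omega
        · simp at hm; omega
        · rfl
  have hz2 : ({({a0,a1} : Finset ℕ), {a1,a2}, {a3,a4}, {a4,a5}} : Finset (Finset ℕ))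
      ∈ Factorizations S X := by
    refine mkFact ?_ ?_ ?_
    · intro A hA; simp only [Finset.mem_insert, Finset.mem_singleton] at hA
      rcases hA with rfl | rfl | rfl | rfl
      exacts [q01, q12, q34, q45]
    · ext t; simp [hXdef]
      try tauto
    · intro A hA; simp only [Finset.mem_insert, Finset.mem_singleton] at hA
      rcases hA with rfl | rfl | rfl | rfl
      · refine ⟨a0, by simp, ?_⟩
        intro B hB hm
        simp only [Finset.mem_insert, Finset.mem_singleton] at hB
        rcases hB with rfl | rfl | rfl | rfl
        · rfl
        · simp at hm; omega
        · simp at hm; omega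
        · simp at hm; omega
      · refine ⟨a2, by simp, ?_⟩
        intro B hB hm
        simp only [Finset.mem_insert, Finset.mem_singleton] at hB
        rcases hB with rfl | rfl | rfl | rfl
        · simp at hm; omega
        · rfl
        · simp at hm; omega
        · simp at hm; omega
      · refine ⟨a3, by simp, ?_⟩
        intro B hB hm
        simp only [Finset.mem_insert, Finset.mem_singleton] at hB
        rcases hB with rfl | rfl | rfl | rfl
        · simp at hm; omega
        · simp at hm; omega
        · rfl
        · simp at hm; omega
      · refine ⟨a5, by simp, ?_⟩
        intro B hB hm
        simp only [Finset.mem_insert, Finset.mem_singleton] at hB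
        rcases hB with rfl | rfl | rfl | rfl
        · simp at hm; omega
        · simp at hm; omega
        · simp at hm; omega
        · rfl
  have hcard := (hhfs X hXS hXne).2 _ hz1 _ hz2
  have c1 : ({({a0,a1} : Finset ℕ), {a2,a3}, {a4,a5}} : Finset (Finset ℕ)).card = 3 := by
    have n1 : ({a0,a1} : Finset ℕ) ∉ ({({a2,a3} : Finset ℕ), {a4,a5}} : Finset (Finset ℕ)) := by
      simp only [Finset.mem_insert, Finset.mem_singleton]
      exact not_or.mpr ⟨pair_ne h02 h03, pair_ne h04 h05⟩
    have n2 : ({a2,a3} : Finset ℕ) ∉ ({({a4,a5} : Finset ℕ)} : Finset (Finset ℕ)) := by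
      simpa using pair_ne h24 h25
    rw [Finset.card_insert_of_notMem n1, Finset.card_insert_of_notMem n2,
      Finset.card_singleton]
  have c2 : ({({a0,a1} : Finset ℕ), {a1,a2}, {a3,a4}, {a4,a5}} : Finset (Finset ℕ)).card = 4 := by
    have n1 : ({a0,a1} : Finset ℕ)
        ∉ ({({a1,a2} : Finset ℕ), {a3,a4}, {a4,a5}} : Finset (Finset ℕ)) := by
      simp only [Finset.mem_insert, Finset.mem_singleton]
      push_neg
      exact ⟨pair_ne h01 h02, pair_ne h03 h04, pair_ne h04 h05⟩
    have n2 : ({a1,a2} : Finset ℕ) ∉ ({({a3,a4} : Finset ℕ), {a4,a5}} : Finset (Finset ℕ)) := by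
      simp only [Finset.mem_insert, Finset.mem_singleton]
      exact not_or.mpr ⟨pair_ne h13 h14, pair_ne h14 h15⟩
    have n3 : ({a3,a4} : Finset ℕ) ∉ ({({a4,a5} : Finset ℕ)} : Finset (Finset ℕ)) := by
      simpa using pair_ne h34 h35
    rw [Finset.card_insert_of_notMem n1, Finset.card_insert_of_notMem n2,
      Finset.card_insert_of_notMem n3, Finset.card_singleton]
  rw [c1, c2] at hcard
  omega

lemma adj_iff {S : Set (Finset ℕ)} {a b : ℕ} :
    (pairingGraph S).Adj a b ↔ a ≠ b ∧ IsQuark S {a,b} := by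
  constructor
  · rintro ⟨hne, h | h⟩
    · exact ⟨hne, h⟩
    · exact ⟨hne, Finset.pair_comm b a ▸ h⟩
  · rintro ⟨hne, h⟩
    exact ⟨hne, Or.inl h⟩

lemma walk_closed {V : Type*} {G : SimpleGraph V} {T : Set V}
    (hT : ∀ x ∈ T, ∀ y, G.Adj x y → y ∈ T) :
    ∀ {a b : V}, G.Walk a b → a ∈ T → b ∈ T := by
  intro a b w
  induction w with
  | nil => exact id
  | cons h p ih => intro ha; exact ih (hT _ ha _ h)

lemma supp_eq {V : Type*} {G : SimpleGraph V} {C : G.ConnectedComponent} {T : Set V} {v : V}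
    (hv : v ∈ C.supp) (hvT : v ∈ T)
    (hT : ∀ x ∈ T, ∀ y, G.Adj x y → y ∈ T)
    (hTr : ∀ t ∈ T, G.Reachable v t) : C.supp = T := by
  ext u
  simp only [SimpleGraph.ConnectedComponent.mem_supp_iff] at *
  constructor
  · intro hu
    have hreach : G.Reachable v u := SimpleGraph.ConnectedComponent.eq.mp (hv.trans hu.symm)
    obtain ⟨w⟩ := hreach
    exact walk_closed hT w hvT
  · intro hu
    rw [← hv]
    exact SimpleGraph.ConnectedComponent.eq.mpr (hTr u hu).symm

lemma cycle3_data {V : Type*} {G : SimpleGraph V} {v : V} (c : G.Walk v v)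
    (hc : c.IsCycle) (hl : c.length = 3) :
    ∃ b w : V, G.Adj v b ∧ G.Adj b w ∧ G.Adj w v ∧ v ≠ b ∧ v ≠ w ∧ b ≠ w := by
  match c, hl with
  | .cons (v := b) h1 (.cons (v := w) h2 (.cons h3 .nil)), _ =>
    have hs := hc.2
    simp [SimpleGraph.Walk.support_cons] at hs
    exact ⟨b, w, h1, h2, h3, Ne.symm hs.1.2, Ne.symm hs.2, hs.1.1⟩

lemma cycle5_data {V : Type*} {G : SimpleGraph V} {v : V} (c : G.Walk v v)
    (hc : c.IsCycle) (hl : c.length = 5) :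
    ∃ b1 b2 b3 b4 : V, G.Adj v b1 ∧ G.Adj b1 b2 ∧ G.Adj b2 b3 ∧ G.Adj b3 b4 ∧ G.Adj b4 v ∧
      v ≠ b1 ∧ v ≠ b2 ∧ v ≠ b3 ∧ v ≠ b4 ∧ b1 ≠ b2 ∧ b1 ≠ b3 ∧ b1 ≠ b4 ∧
      b2 ≠ b3 ∧ b2 ≠ b4 ∧ b3 ≠ b4 := by
  match c, hl with
  | .cons (v := b1) h1 (.cons (v := b2) h2 (.cons (v := b3) h3
      (.cons (v := b4) h4 (.cons h5 .nil)))), _ =>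
    have hs := hc.2
    simp [SimpleGraph.Walk.support_cons] at hs
    refine ⟨b1, b2, b3, b4, h1, h2, h3, h4, h5, ?_, ?_, ?_, ?_, ?_, ?_, ?_, ?_, ?_, ?_⟩ <;>
      tauto

lemma path5_data {V : Type*} {G : SimpleGraph V} {u v : V} (p : G.Walk u v)
    (hp : p.IsPath) (hl : p.length = 5) :
    ∃ b1 b2 b3 b4 : V, G.Adj u b1 ∧ G.Adj b1 b2 ∧ G.Adj b2 b3 ∧ G.Adj b3 b4 ∧ G.Adj b4 v ∧
      u ≠ b1 ∧ u ≠ b2 ∧ u ≠ b3 ∧ u ≠ b4 ∧ u ≠ v ∧ b1 ≠ b2 ∧ b1 ≠ b3 ∧ b1 ≠ b4 ∧ b1 ≠ v ∧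
      b2 ≠ b3 ∧ b2 ≠ b4 ∧ b2 ≠ v ∧ b3 ≠ b4 ∧ b3 ≠ v ∧ b4 ≠ v := by
  match p, hl with
  | .cons (v := b1) h1 (.cons (v := b2) h2 (.cons (v := b3) h3
      (.cons (v := b4) h4 (.cons h5 .nil)))), _ =>
    have hs := hp.support_nodup
    simp [SimpleGraph.Walk.support_cons] at hs
    refine ⟨b1, b2, b3, b4, h1, h2, h3, h4, h5, ?_, ?_, ?_, ?_, ?_, ?_, ?_, ?_, ?_, ?_,
      ?_, ?_, ?_, ?_, ?_⟩ <;> tauto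

lemma inj3 {V : Type*} {a b c : V} (h1 : a ≠ b) (h2 : a ≠ c) (h3 : b ≠ c) :
    Function.Injective ![a,b,c] := by
  intro i j hij
  fin_cases i <;> fin_cases j <;> simp_all

lemma inj5 {V : Type*} {a b c d e : V} (h1 : a ≠ b) (h2 : a ≠ c) (h3 : a ≠ d) (h4 : a ≠ e)
    (h5 : b ≠ c) (h6 : b ≠ d) (h7 : b ≠ e) (h8 : c ≠ d) (h9 : c ≠ e) (h10 : d ≠ e) :
    Function.Injective ![a,b,c,d,e] := by
  intro i j hij
  fin_cases i <;> fin_cases j <;> simp_all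

lemma range3 {V : Type*} {a b c : V} : Set.range ![a,b,c] = {a,b,c} := by
  ext x
  simp [Matrix.range_cons, Matrix.range_empty]
  tauto

lemma range5 {V : Type*} {a b c d e : V} : Set.range ![a,b,c,d,e] = {a,b,c,d,e} := by
  ext x
  simp [Matrix.range_cons, Matrix.range_empty]
  tauto

lemma cyc3_adj {V : Type*} {G : SimpleGraph V} {a b c : V}
    (hab : G.Adj a b) (hbc : G.Adj b c) (hca : G.Adj c a) (i j : Fin 3) :
    G.Adj (![a,b,c] i) (![a,b,c] j) ↔
      ((j : ℕ) = ((i : ℕ) + 1) % 3 ∨ (i : ℕ) = ((j : ℕ) + 1) % 3) := by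
  fin_cases i <;> fin_cases j <;>
    simp [hab, hbc, hca, hab.symm, hbc.symm, hca.symm]

lemma cyc5_adj {V : Type*} {G : SimpleGraph V} {a b c d e : V}
    (hab : G.Adj a b) (hbc : G.Adj b c) (hcd : G.Adj c d) (hde : G.Adj d e)
    (hea : G.Adj e a)
    (nac : ¬ G.Adj a c) (nad : ¬ G.Adj a d) (nbd : ¬ G.Adj b d) (nbe : ¬ G.Adj b e)
    (nce : ¬ G.Adj c e) (i j : Fin 5) :
    G.Adj (![a,b,c,d,e] i) (![a,b,c,d,e] j) ↔
      ((j : ℕ) = ((i : ℕ) + 1) % 5 ∨ (i : ℕ) = ((j : ℕ) + 1) % 5) := by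
  have nca : ¬ G.Adj c a := fun h => nac h.symm
  have nda : ¬ G.Adj d a := fun h => nad h.symm
  have ndb : ¬ G.Adj d b := fun h => nbd h.symm
  have neb : ¬ G.Adj e b := fun h => nbe h.symm
  have nec : ¬ G.Adj e c := fun h => nce h.symm
  fin_cases i <;> fin_cases j <;>
    simp [hab, hbc, hcd, hde, hea, hab.symm, hbc.symm, hcd.symm, hde.symm, hea.symm,
      nac, nad, nbd, nbe, nce, nca, nda, ndb, neb, nec]

/-- If a Boolean sublattice `S` all of whose quarks have size exactly 2
is an HFS, then: (1) its pairing graph contains no path of length 5; (2) any connected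
component containing a cycle of length 3 is the cycle graph `C₃`; (3) any connected
component containing a cycle of length 5 is the cycle graph `C₅`. -/
theorem stmt_11 (S : Set (Finset ℕ)) (hS : IsBSL S)
    (hq : ∀ A : Finset ℕ, IsQuark S A → A.card = 2) (hhfs : IsHFS S) :
    (¬ ∃ (u v : ℕ) (p : (pairingGraph S).Walk u v), p.IsPath ∧ p.length = 5) ∧
    (∀ C : (pairingGraph S).ConnectedComponent,
      (∃ v ∈ C.supp, ∃ c : (pairingGraph S).Walk v v, c.IsCycle ∧ c.length = 3) →
      CompIsCycleGraph (pairingGraph S) C 3) ∧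
    (∀ C : (pairingGraph S).ConnectedComponent,
      (∃ v ∈ C.supp, ∃ c : (pairingGraph S).Walk v v, c.IsCycle ∧ c.length = 5) →
      CompIsCycleGraph (pairingGraph S) C 5) := by

  have qk : ∀ {a b : ℕ}, (pairingGraph S).Adj a b → IsQuark S {a,b} :=
    fun h => (adj_iff.mp h).2
  have nee : ∀ {a b : ℕ}, (pairingGraph S).Adj a b → a ≠ b :=
    fun h => (adj_iff.mp h).1
  refine ⟨?_, ?_, ?_⟩
  · rintro ⟨u, v, p, hp, hl⟩
    obtain ⟨b1, b2, b3, b4, A1, A2, A3, A4, A5,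
      h01, h02, h03, h04, h05, h12, h13, h14, h15, h23, h24, h25, h34, h35, h45⟩ :=
      path5_data p hp hl
    exact lemA hS hhfs (qk A1) (qk A2) (qk A3) (qk A4) (qk A5)
      h01 h02 h03 h04 h05 h12 h13 h14 h15 h23 h24 h25 h34 h35 h45
  · rintro C ⟨v, hv, c, hc, hl⟩
    obtain ⟨b, w, A1, A2, A3, nvb, nvw, nbw⟩ := cycle3_data c hc hl
    have hT : ∀ x ∈ ({v, b, w} : Set ℕ), ∀ y, (pairingGraph S).Adj x y →
        y ∈ ({v, b, w} : Set ℕ) := by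
      intro x hx y hxy
      by_contra hy
      simp only [Set.mem_insert_iff, Set.mem_singleton_iff] at hx hy
      push_neg at hy
      obtain ⟨hyv, hyb, hyw⟩ := hy
      rcases hx with rfl | rfl | rfl
      · exact lemB hS hhfs (qk A1) (qk A3.symm) (qk hxy) (qk A2)
          nvb nvw (nee hxy) nbw (Ne.symm hyb) (Ne.symm hyw)
      · exact lemB hS hhfs (qk A2) (qk A1.symm) (qk hxy) (qk A3)
          nbw (Ne.symm nvb) (nee hxy) (Ne.symm nvw) (Ne.symm hyw) (Ne.symm hyv)
      · exact lemB hS hhfs (qk A3) (qk A2.symm) (qk hxy) (qk A1)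
          (Ne.symm nvw) (Ne.symm nbw) (nee hxy) nvb (Ne.symm hyv) (Ne.symm hyb)
    have hsupp : C.supp = ({v, b, w} : Set ℕ) := by
      refine supp_eq hv (by simp) hT ?_
      intro t ht
      simp only [Set.mem_insert_iff, Set.mem_singleton_iff] at ht
      rcases ht with rfl | rfl | rfl
      · exact SimpleGraph.Reachable.refl t
      · exact A1.reachable
      · exact A1.reachable.trans A2.reachable
    exact ⟨![v, b, w], inj3 nvb nvw nbw, by rw [hsupp, range3], cyc3_adj A1 A2 A3⟩
  · rintro C ⟨v, hv, c, hc, hl⟩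
    obtain ⟨b1, b2, b3, b4, A1, A2, A3, A4, A5, n01, n02, n03, n04,
      n12, n13, n14, n23, n24, n34⟩ := cycle5_data c hc hl
    -- chord non-adjacencies
    have nc02 : ¬ (pairingGraph S).Adj v b2 := by
      intro h
      exact lemB hS hhfs (qk A1) (qk h) (qk A5.symm) (qk A2)
        n01 n02 n04 n12 n14 n24
    have nc03 : ¬ (pairingGraph S).Adj v b3 := by
      intro h
      exact lemB hS hhfs (qk A5.symm) (qk h) (qk A1) (qk A4.symm)
        n04 n03 n01 (Ne.symm n34) (Ne.symm n14) (Ne.symm n13)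
    have nc13 : ¬ (pairingGraph S).Adj b1 b3 := by
      intro h
      exact lemB hS hhfs (qk A2) (qk h) (qk A1.symm) (qk A3)
        n12 n13 (Ne.symm n01) n23 (Ne.symm n02) (Ne.symm n03)
    have nc14 : ¬ (pairingGraph S).Adj b1 b4 := by
      intro h
      exact lemB hS hhfs (qk A1.symm) (qk h) (qk A2) (qk A5.symm)
        (Ne.symm n01) n14 n12 n04 n02 (Ne.symm n24)
    have nc24 : ¬ (pairingGraph S).Adj b2 b4 := by
      intro h
      exact lemB hS hhfs (qk A3) (qk h) (qk A2.symm) (qk A4)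
        n23 n24 (Ne.symm n12) n34 (Ne.symm n13) (Ne.symm n14)
    have hT : ∀ x ∈ ({v, b1, b2, b3, b4} : Set ℕ), ∀ y, (pairingGraph S).Adj x y →
        y ∈ ({v, b1, b2, b3, b4} : Set ℕ) := by
      intro x hx y hxy
      by_contra hy
      simp only [Set.mem_insert_iff, Set.mem_singleton_iff] at hx hy
      push_neg at hy
      obtain ⟨hy0, hy1, hy2, hy3, hy4⟩ := hy
      rcases hx with rfl | rfl | rfl | rfl | rfl
      · exact lemA hS hhfs (qk hxy.symm) (qk A1) (qk A2) (qk A3) (qk A4)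
          hy0 hy1 hy2 hy3 hy4
          n01 n02 n03 n04 n12 n13 n14 n23 n24 n34
      · exact lemA hS hhfs (qk hxy.symm) (qk A2) (qk A3) (qk A4) (qk A5)
          hy1 hy2 hy3 hy4 hy0
          n12 n13 n14 (Ne.symm n01) n23 n24 (Ne.symm n02) n34 (Ne.symm n03) (Ne.symm n04)
      · exact lemA hS hhfs (qk hxy.symm) (qk A3) (qk A4) (qk A5) (qk A1)
          hy2 hy3 hy4 hy0 hy1
          n23 n24 (Ne.symm n02) (Ne.symm n12) n34 (Ne.symm n03) (Ne.symm n13)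
          (Ne.symm n04) (Ne.symm n14) n01
      · exact lemA hS hhfs (qk hxy.symm) (qk A4) (qk A5) (qk A1) (qk A2)
          hy3 hy4 hy0 hy1 hy2
          n34 (Ne.symm n03) (Ne.symm n13) (Ne.symm n23) (Ne.symm n04) (Ne.symm n14)
          (Ne.symm n24) n01 n02 n12
      · exact lemA hS hhfs (qk hxy.symm) (qk A5) (qk A1) (qk A2) (qk A3)
          hy4 hy0 hy1 hy2 hy3
          (Ne.symm n04) (Ne.symm n14) (Ne.symm n24) (Ne.symm n34) n01 n02 n03 n12 n13 n23
    have hsupp : C.supp = ({v, b1, b2, b3, b4} : Set ℕ) := by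
      refine supp_eq hv (by simp) hT ?_
      intro t ht
      simp only [Set.mem_insert_iff, Set.mem_singleton_iff] at ht
      rcases ht with rfl | rfl | rfl | rfl | rfl
      · exact SimpleGraph.Reachable.refl t
      · exact A1.reachable
      · exact A1.reachable.trans A2.reachable
      · exact (A1.reachable.trans A2.reachable).trans A3.reachable
      · exact ((A1.reachable.trans A2.reachable).trans A3.reachable).trans A4.reachable
    exact ⟨![v, b1, b2, b3, b4], inj5 n01 n02 n03 n04 n12 n13 n14 n23 n24 n34,
      by rw [hsupp, range5], cyc5_adj A1 A2 A3 A4 A5 nc02 nc03 nc13 nc14 nc24⟩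
end

section
/- For every α ∈ ℝ≥0∞ with α ≥ 1 (including α = ∞), there exists a factorizable Boolean sublattice S whose elasticity satisfies ρ(S) = α. -/
/-!
Take pairwise disjoint grids, the `n`-th of size `a n × b n` with `2 ≤ a n ≤ b n`, and let the
quarks be their rows and columns. A cell lies only in its row and its column, so in a
factorization of `X` the quarks taken from a grid that `X` does not fill are forced (they are the
rows and columns of that grid contained in `X`), while a grid that `X` fills contributes either
all of its `a n` rows or all of its `b n` columns. Hence two factorization lengths of `X` differ
by a factor at most `⨆ n, b n / a n`, and the full grids attain every ratio `b n / a n`; it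
remains to choose `b n / a n` with supremum `α`.
-/

open scoped ENNReal

open Finset Filter Topology

def finiteUnions (Q : Set (Finset ℕ)) : Set (Finset ℕ) :=
  {X | ∃ z : Finset (Finset ℕ), ↑z ⊆ Q ∧ z.sup id = X}

theorem isBSL_finiteUnions (Q : Set (Finset ℕ)) : IsBSL (finiteUnions Q) := by
  refine ⟨⟨∅, by simp, rfl⟩, ?_⟩
  rintro _ ⟨z, hz, rfl⟩ _ ⟨w, hw, rfl⟩
  exact ⟨z ∪ w, by simpa using ⟨hz, hw⟩, sup_union⟩

section FiniteUnions

variable {Q : Set (Finset ℕ)}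

theorem mem_finiteUnions_of_mem {A : Finset ℕ} (hA : A ∈ Q) : A ∈ finiteUnions Q :=
  ⟨{A}, by simpa using hA, by simp⟩

theorem exists_mem_subset_of_mem_finiteUnions {X : Finset ℕ} (hX : X ∈ finiteUnions Q)
    {x : ℕ} (hx : x ∈ X) : ∃ A ∈ Q, x ∈ A ∧ A ⊆ X := by
  obtain ⟨z, hz, rfl⟩ := hX
  obtain ⟨A, hA, hxA⟩ := mem_sup.1 hx
  exact ⟨A, hz hA, hxA, le_sup (f := id) hA⟩

theorem mem_of_isQuark_finiteUnions {A : Finset ℕ} (hA : IsQuark (finiteUnions Q) A) :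
    A ∈ Q := by
  obtain ⟨hAQ, hA0, hmin⟩ := hA
  obtain ⟨x, hx⟩ := nonempty_iff_ne_empty.2 hA0
  obtain ⟨B, hBQ, hxB, hBA⟩ := exists_mem_subset_of_mem_finiteUnions hAQ hx
  obtain rfl : B = A := by
    by_contra hne
    exact hmin B (mem_finiteUnions_of_mem hBQ) (ne_empty_of_mem hxB)
      (ssubset_of_subset_of_ne hBA hne)
  exact hBQ

theorem isQuark_finiteUnions_of_mem (hQ : ∅ ∉ Q) (hanti : IsAntichain (· ⊆ ·) Q)
    {A : Finset ℕ} (hA : A ∈ Q) : IsQuark (finiteUnions Q) A := by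
  refine ⟨mem_finiteUnions_of_mem hA, ne_of_mem_of_not_mem hA hQ, fun B hB hB0 hBA => ?_⟩
  obtain ⟨x, hx⟩ := nonempty_iff_ne_empty.2 hB0
  obtain ⟨C, hCQ, -, hCB⟩ := exists_mem_subset_of_mem_finiteUnions hB hx
  obtain rfl : C = A := hanti.eq hCQ hA (hCB.trans hBA.subset)
  exact hBA.not_subset hCB

theorem factorizable_finiteUnions (hQ : ∅ ∉ Q) (hanti : IsAntichain (· ⊆ ·) Q) :
    Factorizable (finiteUnions Q) := by
  rintro X ⟨z, hz, rfl⟩ -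
  obtain ⟨w, ⟨hwz, hw⟩, hmin⟩ := wellFounded_lt.has_min
    {w : Finset (Finset ℕ) | w ⊆ z ∧ w.sup id = z.sup id} ⟨z, subset_rfl, rfl⟩
  exact ⟨w, fun A hA => isQuark_finiteUnions_of_mem hQ hanti (hz (hwz hA)), hw,
    fun v hv hv' => hmin v ⟨hv.subset.trans hwz, hv'⟩ hv⟩

end FiniteUnions

section Factorization

variable {S : Set (Finset ℕ)} {X : Finset ℕ} {z z' : Finset (Finset ℕ)}

theorem IsFactorization.subset (hz : IsFactorization S X z) {A : Finset ℕ} (hA : A ∈ z) :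
    A ⊆ X :=
  hz.2.1 ▸ le_sup (f := id) hA

theorem IsFactorization.exists_mem (hz : IsFactorization S X z) {x : ℕ} (hx : x ∈ X) :
    ∃ A ∈ z, x ∈ A :=
  mem_sup.1 (hz.2.1 ▸ hx)

theorem IsFactorization.not_subset_sup_erase (hz : IsFactorization S X z) {A : Finset ℕ}
    (hA : A ∈ z) : ¬ A ⊆ (z.erase A).sup id := by
  intro h
  have hle : z.sup id ≤ (z.erase A).sup id :=
    calc z.sup id = (insert A (z.erase A)).sup id := by rw [insert_erase hA]
      _ ≤ (z.erase A).sup id := by rw [sup_insert]; exact sup_le h le_rfl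
  exact hz.2.2 _ (erase_ssubset hA)
    (le_antisymm ((sup_mono (erase_subset A z)).trans hz.2.1.le) (hz.2.1 ▸ hle))

theorem isFactorization_sup (hq : ∀ A ∈ z, IsQuark S A)
    (hprivate : ∀ A ∈ z, ∃ x ∈ A, ∀ B ∈ z, x ∈ B → B = A) :
    IsFactorization S (z.sup id) z := by
  refine ⟨hq, rfl, fun w hw hsup => ?_⟩
  obtain ⟨A, hAz, hAw⟩ := exists_of_ssubset hw
  obtain ⟨x, hxA, hx⟩ := hprivate A hAz
  obtain ⟨B, hBw, hxB⟩ := mem_sup.1 (hsup.symm ▸ le_sup (f := id) hAz hxA)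
  exact hAw (hx B (hw.subset hBw) hxB ▸ hBw)

theorem elasticityOf_le {β : ℝ≥0∞} (hne : (Factorizations S X).Nonempty)
    (h : ∀ z ∈ Factorizations S X, ∀ z' ∈ Factorizations S X, (z.card : ℝ≥0∞) ≤ β * z'.card) :
    elasticityOf S X ≤ β := by
  obtain ⟨z', hz', hcard⟩ : sInf (lengthsOf S X) ∈ lengthsOf S X :=
    Nat.sInf_mem (hne.image _)
  rw [elasticityOf, ← hcard]
  exact ENNReal.div_le_of_le_mul (iSup₂_le fun _ ⟨z, hz, hzc⟩ => hzc ▸ h z hz z' hz')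

theorem card_div_card_le_elasticityOf (hz : z ∈ Factorizations S X)
    (hz' : z' ∈ Factorizations S X) : (z.card : ℝ≥0∞) / z'.card ≤ elasticityOf S X :=
  ENNReal.div_le_div (le_iSup₂_of_le z.card ⟨z, hz, rfl⟩ le_rfl)
    (Nat.cast_le.2 (Nat.sInf_le ⟨z', hz', rfl⟩))

end Factorization

section Grid

variable (a b : ℕ → ℕ)

def gridCell (n i j : ℕ) : ℕ := Nat.pair n (Nat.pair i j)

def gridRow (n i : ℕ) : Finset ℕ := (range (b n)).image (gridCell n i)

def gridCol (n j : ℕ) : Finset ℕ := (range (a n)).image (gridCell n · j)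

def gridRows (n : ℕ) : Finset (Finset ℕ) := (range (a n)).image (gridRow b n)

def gridCols (n : ℕ) : Finset (Finset ℕ) := (range (b n)).image (gridCol a n)

def gridLines (n : ℕ) : Finset (Finset ℕ) := gridRows a b n ∪ gridCols a b n

def gridQuarks : Set (Finset ℕ) := ⋃ n, ↑(gridLines a b n)

def gridLattice : Set (Finset ℕ) := finiteUnions (gridQuarks a b)

def gridIdx (A : Finset ℕ) : ℕ := A.sup fun x => x.unpair.1

variable {a b} {n m i j k : ℕ} {A : Finset ℕ}

@[simp]
theorem gridCell_inj {n' i' j' : ℕ} :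
    gridCell n i j = gridCell n' i' j' ↔ n = n' ∧ i = i' ∧ j = j' := by
  simp [gridCell]

theorem mem_gridRow {x : ℕ} : x ∈ gridRow b n i ↔ ∃ j < b n, gridCell n i j = x := by
  simp [gridRow]

theorem mem_gridCol {x : ℕ} : x ∈ gridCol a n j ↔ ∃ i < a n, gridCell n i j = x := by
  simp [gridCol]

@[simp]
theorem gridCell_mem_gridRow : gridCell m k j ∈ gridRow b n i ↔ m = n ∧ k = i ∧ j < b n := by
  simp only [mem_gridRow, gridCell_inj]
  constructor
  · rintro ⟨j, hj, rfl, rfl, rfl⟩; exact ⟨rfl, rfl, hj⟩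
  · rintro ⟨rfl, rfl, hj⟩; exact ⟨j, hj, rfl, rfl, rfl⟩

@[simp]
theorem gridCell_mem_gridCol : gridCell m i k ∈ gridCol a n j ↔ m = n ∧ k = j ∧ i < a n := by
  simp only [mem_gridCol, gridCell_inj]
  constructor
  · rintro ⟨i, hi, rfl, rfl, rfl⟩; exact ⟨rfl, rfl, hi⟩
  · rintro ⟨rfl, rfl, hi⟩; exact ⟨i, hi, rfl, rfl, rfl⟩

theorem mem_gridLines :
    A ∈ gridLines a b n ↔ (∃ i < a n, gridRow b n i = A) ∨ ∃ j < b n, gridCol a n j = A := by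
  simp [gridLines, gridRows, gridCols]

theorem mem_gridQuarks : A ∈ gridQuarks a b ↔ ∃ n, A ∈ gridLines a b n := by
  simp [gridQuarks]

theorem gridIdx_of_mem_gridLines (ha : 0 < a n) (hb : 0 < b n) (hA : A ∈ gridLines a b n) :
    gridIdx A = n := by
  rcases mem_gridLines.1 hA with ⟨i, -, rfl⟩ | ⟨j, -, rfl⟩
  · rw [gridIdx, gridRow, sup_image]
    simpa [Function.comp_def, gridCell] using sup_const (nonempty_range_iff.2 hb.ne') n
  · rw [gridIdx, gridCol, sup_image]
    simpa [Function.comp_def, gridCell] using sup_const (nonempty_range_iff.2 ha.ne') n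

theorem eq_gridRow_or_eq_gridCol_of_gridCell_mem (hA : A ∈ gridQuarks a b)
    (hx : gridCell n i j ∈ A) : A = gridRow b n i ∨ A = gridCol a n j := by
  obtain ⟨m, hm⟩ := mem_gridQuarks.1 hA
  rcases mem_gridLines.1 hm with ⟨k, -, rfl⟩ | ⟨k, -, rfl⟩
  · obtain ⟨rfl, rfl, -⟩ := gridCell_mem_gridRow.1 hx
    exact Or.inl rfl
  · obtain ⟨rfl, rfl, -⟩ := gridCell_mem_gridCol.1 hx
    exact Or.inr rfl

theorem gridRow_ne_gridCol (hb : 2 ≤ b n) : gridRow b n i ≠ gridCol a n j := by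
  intro h
  have h0 : gridCell n i 0 ∈ gridCol a n j := h ▸ gridCell_mem_gridRow.2 ⟨rfl, rfl, by omega⟩
  have h1 : gridCell n i 1 ∈ gridCol a n j := h ▸ gridCell_mem_gridRow.2 ⟨rfl, rfl, by omega⟩
  have := (gridCell_mem_gridCol.1 h0).2.1
  have := (gridCell_mem_gridCol.1 h1).2.1
  omega

theorem gridRow_nonempty (hb : 0 < b n) : (gridRow b n i).Nonempty :=
  ⟨_, gridCell_mem_gridRow.2 ⟨rfl, rfl, hb⟩⟩

theorem gridCol_nonempty (ha : 0 < a n) : (gridCol a n j).Nonempty :=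
  ⟨_, gridCell_mem_gridCol.2 ⟨rfl, rfl, ha⟩⟩

theorem empty_notMem_gridQuarks (ha : ∀ n, 0 < a n) (hb : ∀ n, 0 < b n) :
    ∅ ∉ gridQuarks a b := by
  intro h
  obtain ⟨n, hn⟩ := mem_gridQuarks.1 h
  rcases mem_gridLines.1 hn with ⟨i, -, hi⟩ | ⟨j, -, hj⟩
  · exact (gridRow_nonempty (hb n)).ne_empty hi
  · exact (gridCol_nonempty (ha n)).ne_empty hj

theorem isAntichain_gridQuarks (ha : ∀ n, 2 ≤ a n) (hb : ∀ n, 2 ≤ b n) :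
    IsAntichain (· ⊆ ·) (gridQuarks a b) := by
  intro A hA B hB hne hAB
  obtain ⟨n, hn⟩ := mem_gridQuarks.1 hA
  rcases mem_gridLines.1 hn with ⟨i, -, rfl⟩ | ⟨j, -, rfl⟩
  · have h0 := hAB (gridCell_mem_gridRow.2 ⟨rfl, rfl, (by have := hb n; omega : 0 < b n)⟩)
    have h1 := hAB (gridCell_mem_gridRow.2 ⟨rfl, rfl, (by have := hb n; omega : 1 < b n)⟩)
    obtain rfl : B = gridCol a n 0 :=
      (eq_gridRow_or_eq_gridCol_of_gridCell_mem hB h0).resolve_left hne.symm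
    simp at h1
  · have h0 := hAB (gridCell_mem_gridCol.2 ⟨rfl, rfl, (by have := ha n; omega : 0 < a n)⟩)
    have h1 := hAB (gridCell_mem_gridCol.2 ⟨rfl, rfl, (by have := ha n; omega : 1 < a n)⟩)
    obtain rfl : B = gridRow b n 0 :=
      (eq_gridRow_or_eq_gridCol_of_gridCell_mem hB h0).resolve_right hne.symm
    simp at h1

theorem isQuark_gridLattice (ha : ∀ n, 2 ≤ a n) (hb : ∀ n, 2 ≤ b n)
    (hA : A ∈ gridQuarks a b) : IsQuark (gridLattice a b) A :=
  isQuark_finiteUnions_of_mem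
    (empty_notMem_gridQuarks (fun n => zero_lt_two.trans_le (ha n))
      (fun n => zero_lt_two.trans_le (hb n)))
    (isAntichain_gridQuarks ha hb) hA

theorem factorizable_gridLattice (ha : ∀ n, 2 ≤ a n) (hb : ∀ n, 2 ≤ b n) :
    Factorizable (gridLattice a b) :=
  factorizable_finiteUnions
    (empty_notMem_gridQuarks (fun n => zero_lt_two.trans_le (ha n))
      (fun n => zero_lt_two.trans_le (hb n)))
    (isAntichain_gridQuarks ha hb)

theorem card_gridRows (hb : 0 < b n) : (gridRows a b n).card = a n := by
  refine (card_image_of_injective _ fun i i' h => ?_).trans (card_range _)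
  have hi : gridCell n i 0 ∈ gridRow b n i := gridCell_mem_gridRow.2 ⟨rfl, rfl, hb⟩
  rw [h] at hi
  exact (gridCell_mem_gridRow.1 hi).2.1

theorem card_gridCols (ha : 0 < a n) : (gridCols a b n).card = b n := by
  refine (card_image_of_injective _ fun j j' h => ?_).trans (card_range _)
  have hj : gridCell n 0 j ∈ gridCol a n j := gridCell_mem_gridCol.2 ⟨rfl, rfl, ha⟩
  rw [h] at hj
  exact (gridCell_mem_gridCol.1 hj).2.1

theorem sup_gridCols : (gridCols a b n).sup id = (gridRows a b n).sup id := by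
  refine Finset.ext fun x => ?_
  simp only [gridCols, gridRows, sup_image, CompTriple.comp_eq, Finset.mem_sup, mem_range,
    mem_gridCol, mem_gridRow]
  exact ⟨fun ⟨j, hj, i, hi, h⟩ => ⟨i, hi, j, hj, h⟩,
    fun ⟨i, hi, j, hj, h⟩ => ⟨j, hj, i, hi, h⟩⟩

theorem isFactorization_gridRows (ha : ∀ n, 2 ≤ a n) (hb : ∀ n, 2 ≤ b n) :
    IsFactorization (gridLattice a b) ((gridRows a b n).sup id) (gridRows a b n) := by
  refine isFactorization_sup
    (fun A hA => isQuark_gridLattice ha hb (mem_gridQuarks.2 ⟨n, mem_union_left _ hA⟩))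
    fun A hA => ?_
  obtain ⟨i, -, rfl⟩ := mem_image.1 hA
  refine ⟨gridCell n i 0, gridCell_mem_gridRow.2 ⟨rfl, rfl, zero_lt_two.trans_le (hb n)⟩,
    fun B hB hxB => ?_⟩
  obtain ⟨i', -, rfl⟩ := mem_image.1 hB
  obtain ⟨-, rfl, -⟩ := gridCell_mem_gridRow.1 hxB
  rfl

theorem isFactorization_gridCols (ha : ∀ n, 2 ≤ a n) (hb : ∀ n, 2 ≤ b n) :
    IsFactorization (gridLattice a b) ((gridRows a b n).sup id) (gridCols a b n) := by
  rw [← sup_gridCols]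
  refine isFactorization_sup
    (fun A hA => isQuark_gridLattice ha hb (mem_gridQuarks.2 ⟨n, mem_union_right _ hA⟩))
    fun A hA => ?_
  obtain ⟨j, -, rfl⟩ := mem_image.1 hA
  refine ⟨gridCell n 0 j, gridCell_mem_gridCol.2 ⟨rfl, rfl, zero_lt_two.trans_le (ha n)⟩,
    fun B hB hxB => ?_⟩
  obtain ⟨j', -, rfl⟩ := mem_image.1 hB
  obtain ⟨-, rfl, -⟩ := gridCell_mem_gridCol.1 hxB
  rfl

variable {X : Finset ℕ} {z z' : Finset (Finset ℕ)}

theorem IsFactorization.gridRow_mem_or_gridCol_mem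
    (hz : IsFactorization (gridLattice a b) X z) (hx : gridCell n i j ∈ X) :
    gridRow b n i ∈ z ∨ gridCol a n j ∈ z := by
  obtain ⟨A, hA, hxA⟩ := hz.exists_mem hx
  rcases eq_gridRow_or_eq_gridCol_of_gridCell_mem
    (mem_of_isQuark_finiteUnions (hz.1 A hA)) hxA with rfl | rfl
  exacts [Or.inl hA, Or.inr hA]

theorem IsFactorization.gridRow_notMem (hz : IsFactorization (gridLattice a b) X z)
    (hb : 2 ≤ b n) (hi : i < a n) (hcols : ∀ j < b n, gridCol a n j ∈ z) :
    gridRow b n i ∉ z := by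
  intro hrow
  refine hz.not_subset_sup_erase hrow fun x hx => ?_
  obtain ⟨j, hj, rfl⟩ := mem_gridRow.1 hx
  exact mem_sup.2 ⟨gridCol a n j, mem_erase.2 ⟨(gridRow_ne_gridCol hb).symm, hcols j hj⟩,
    gridCell_mem_gridCol.2 ⟨rfl, rfl, hi⟩⟩

theorem IsFactorization.gridCol_notMem (hz : IsFactorization (gridLattice a b) X z)
    (hb : 2 ≤ b n) (hj : j < b n) (hrows : ∀ i < a n, gridRow b n i ∈ z) :
    gridCol a n j ∉ z := by
  intro hcol
  refine hz.not_subset_sup_erase hcol fun x hx => ?_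
  obtain ⟨i, hi, rfl⟩ := mem_gridCol.1 hx
  exact mem_sup.2 ⟨gridRow b n i, mem_erase.2 ⟨gridRow_ne_gridCol hb, hrows i hi⟩,
    gridCell_mem_gridRow.2 ⟨rfl, rfl, hj⟩⟩

theorem IsFactorization.inter_gridLines_eq_of_full
    (hz : IsFactorization (gridLattice a b) X z) (hb : 2 ≤ b n)
    (hfull : ∀ i < a n, ∀ j < b n, gridCell n i j ∈ X) :
    z ∩ gridLines a b n = gridRows a b n ∨ z ∩ gridLines a b n = gridCols a b n := by
  have inter_union_eq : ∀ {s t : Finset (Finset ℕ)}, s ⊆ z → Disjoint z t → z ∩ (s ∪ t) = s :=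
    fun hs ht => by
      rw [inter_union_distrib_left, inter_eq_right.2 hs, disjoint_iff_inter_eq_empty.1 ht,
        union_empty]
  by_cases hrows : ∀ i < a n, gridRow b n i ∈ z
  · refine Or.inl (inter_union_eq ?_ (disjoint_right.2 ?_))
    · simpa [gridRows, image_subset_iff] using hrows
    · simp only [gridCols, mem_image, mem_range]
      rintro _ ⟨j, hj, rfl⟩
      exact hz.gridCol_notMem hb hj hrows
  · push Not at hrows
    obtain ⟨i₀, hi₀, hrow⟩ := hrows
    have hcols : ∀ j < b n, gridCol a n j ∈ z := fun j hj =>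
      (hz.gridRow_mem_or_gridCol_mem (hfull i₀ hi₀ j hj)).resolve_left hrow
    refine Or.inr ?_
    rw [gridLines, union_comm]
    refine inter_union_eq ?_ (disjoint_right.2 ?_)
    · simpa [gridCols, image_subset_iff] using hcols
    · simp only [gridRows, mem_image, mem_range]
      rintro _ ⟨i, hi, rfl⟩
      exact hz.gridRow_notMem hb hi hcols

theorem IsFactorization.inter_gridLines_subset {i₀ j₀ : ℕ}
    (hz : IsFactorization (gridLattice a b) X z) (hz' : IsFactorization (gridLattice a b) X z')
    (hi₀ : i₀ < a n) (hj₀ : j₀ < b n) (hx : gridCell n i₀ j₀ ∉ X) :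
    z ∩ gridLines a b n ⊆ z' ∩ gridLines a b n := by
  intro A hA
  rw [mem_inter] at hA ⊢
  refine ⟨?_, hA.2⟩
  rcases mem_gridLines.1 hA.2 with ⟨i, -, rfl⟩ | ⟨j, -, rfl⟩
  · refine (hz'.gridRow_mem_or_gridCol_mem
      (hz.subset hA.1 (gridCell_mem_gridRow.2 ⟨rfl, rfl, hj₀⟩))).resolve_right fun hcol => ?_
    exact hx (hz'.subset hcol (gridCell_mem_gridCol.2 ⟨rfl, rfl, hi₀⟩))
  · refine (hz'.gridRow_mem_or_gridCol_mem
      (hz.subset hA.1 (gridCell_mem_gridCol.2 ⟨rfl, rfl, hi₀⟩))).resolve_left fun hrow => ?_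
    exact hx (hz'.subset hrow (gridCell_mem_gridRow.2 ⟨rfl, rfl, hj₀⟩))

theorem mul_card_inter_gridLines_le (ha : 2 ≤ a n) (hab : a n ≤ b n)
    (hz : IsFactorization (gridLattice a b) X z) (hz' : IsFactorization (gridLattice a b) X z') :
    a n * (z ∩ gridLines a b n).card ≤ b n * (z' ∩ gridLines a b n).card := by
  by_cases hfull : ∀ i < a n, ∀ j < b n, gridCell n i j ∈ X
  · have hbounds : ∀ w, IsFactorization (gridLattice a b) X w →
        a n ≤ (w ∩ gridLines a b n).card ∧ (w ∩ gridLines a b n).card ≤ b n := by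
      intro w hw
      rcases hw.inter_gridLines_eq_of_full (ha.trans hab) hfull with h | h
      · rw [h, card_gridRows (by omega)]
        exact ⟨le_rfl, hab⟩
      · rw [h, card_gridCols (by omega)]
        exact ⟨hab, le_rfl⟩
    calc a n * (z ∩ gridLines a b n).card ≤ a n * b n :=
          Nat.mul_le_mul_left _ (hbounds z hz).2
      _ ≤ b n * (z' ∩ gridLines a b n).card := by
        rw [mul_comm]
        exact Nat.mul_le_mul_left _ (hbounds z' hz').1
  · push Not at hfull
    obtain ⟨i₀, hi₀, j₀, hj₀, hx⟩ := hfull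
    rw [(hz.inter_gridLines_subset hz' hi₀ hj₀ hx).antisymm
      (hz'.inter_gridLines_subset hz hi₀ hj₀ hx)]
    exact Nat.mul_le_mul_right _ hab

theorem card_eq_sum_card_inter_gridLines (ha : ∀ n, 0 < a n) (hb : ∀ n, 0 < b n)
    {w : Finset (Finset ℕ)} (hw : ↑w ⊆ gridQuarks a b) {t : Finset ℕ}
    (ht : ∀ A ∈ w, gridIdx A ∈ t) : w.card = ∑ n ∈ t, (w ∩ gridLines a b n).card := by
  rw [card_eq_sum_card_fiberwise ht]
  refine sum_congr rfl fun n _ => congrArg card ?_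
  rw [← filter_mem_eq_inter]
  refine filter_congr fun A hA => ?_
  obtain ⟨m, hm⟩ := mem_gridQuarks.1 (hw hA)
  rw [gridIdx_of_mem_gridLines (ha m) (hb m) hm]
  exact ⟨(· ▸ hm), fun h => (gridIdx_of_mem_gridLines (ha m) (hb m) hm).symm.trans
    (gridIdx_of_mem_gridLines (ha n) (hb n) h)⟩

theorem card_le_iSup_div_mul_card (ha : ∀ n, 2 ≤ a n) (hab : ∀ n, a n ≤ b n)
    (hz : IsFactorization (gridLattice a b) X z) (hz' : IsFactorization (gridLattice a b) X z') :
    (z.card : ℝ≥0∞) ≤ (⨆ n, (b n : ℝ≥0∞) / a n) * z'.card := by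
  set β := ⨆ n, (b n : ℝ≥0∞) / a n
  set t := (z ∪ z').image gridIdx
  have hcard : ∀ w, IsFactorization (gridLattice a b) X w → w ⊆ z ∪ z' →
      (w.card : ℝ≥0∞) = ∑ n ∈ t, ((w ∩ gridLines a b n).card : ℝ≥0∞) := fun w hw hsub => by
    rw [card_eq_sum_card_inter_gridLines (fun n => zero_lt_two.trans_le (ha n))
      (fun n => zero_lt_two.trans_le ((ha n).trans (hab n)))
      (fun A hA => mem_of_isQuark_finiteUnions (hw.1 A hA))
      (fun A hA => mem_image_of_mem _ (hsub hA))]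
    push_cast
    rfl
  have hgrid : ∀ n, ((z ∩ gridLines a b n).card : ℝ≥0∞) ≤ β * (z' ∩ gridLines a b n).card := by
    intro n
    refine le_trans ?_ (mul_le_mul_left (le_iSup (fun n => (b n : ℝ≥0∞) / a n) n) _)
    rw [← ENNReal.mul_div_right_comm,
      ENNReal.le_div_iff_mul_le (by simp; have := ha n; omega) (by simp), mul_comm]
    exact_mod_cast mul_card_inter_gridLines_le (ha n) (hab n) hz hz'
  calc (z.card : ℝ≥0∞) = ∑ n ∈ t, ((z ∩ gridLines a b n).card : ℝ≥0∞) :=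
        hcard z hz subset_union_left
    _ ≤ ∑ n ∈ t, β * (z' ∩ gridLines a b n).card := sum_le_sum fun n _ => hgrid n
    _ = β * z'.card := by rw [← mul_sum, hcard z' hz' subset_union_right]

theorem elasticity_gridLattice (ha : ∀ n, 2 ≤ a n) (hab : ∀ n, a n ≤ b n) :
    elasticity (gridLattice a b) = ⨆ n, (b n : ℝ≥0∞) / a n := by
  have hb : ∀ n, 2 ≤ b n := fun n => (ha n).trans (hab n)
  refine le_antisymm (iSup₂_le fun X hX => elasticityOf_le
    (factorizable_gridLattice ha hb X hX.1 hX.2)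
    fun z hz z' hz' => card_le_iSup_div_mul_card ha hab hz hz') (iSup_le fun n => ?_)
  set X := (gridRows a b n).sup id
  have hX : X ∈ gridLattice a b ∧ X ≠ ∅ := by
    refine ⟨⟨_, fun A hA => mem_gridQuarks.2 ⟨n, mem_union_left _ hA⟩, rfl⟩, ?_⟩
    have h0 : gridRow b n 0 ∈ gridRows a b n :=
      mem_image_of_mem _ (mem_range.2 (zero_lt_two.trans_le (ha n)))
    exact ((gridRow_nonempty (zero_lt_two.trans_le (hb n))).mono
      (le_sup (f := id) h0)).ne_empty
  calc (b n : ℝ≥0∞) / a n = (gridCols a b n).card / (gridRows a b n).card := by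
        rw [card_gridCols (zero_lt_two.trans_le (ha n)),
          card_gridRows (zero_lt_two.trans_le (hb n))]
    _ ≤ elasticityOf (gridLattice a b) X :=
        card_div_card_le_elasticityOf (isFactorization_gridCols ha hb)
          (isFactorization_gridRows ha hb)
    _ ≤ elasticity (gridLattice a b) := le_iSup₂_of_le X hX le_rfl

end Grid

theorem exists_iSup_div_eq {α : ℝ≥0∞} (hα : 1 ≤ α) :
    ∃ a b : ℕ → ℕ, (∀ n, 2 ≤ a n) ∧ (∀ n, a n ≤ b n) ∧ ⨆ n, (b n : ℝ≥0∞) / a n = α := by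
  rcases eq_or_ne α ⊤ with rfl | hα_top
  · refine ⟨fun _ => 2, fun n => (n + 1) * 2, fun _ => le_rfl, fun n => by simp, ?_⟩
    refine eq_top_iff.2 (ENNReal.iSup_natCast ▸ iSup_mono fun n => ?_)
    rw [Nat.cast_mul, ENNReal.mul_div_cancel_right (by simp) (by simp)]
    exact_mod_cast n.le_succ
  · set c := α.toReal
    have hc : 1 ≤ c := by simpa using ENNReal.toReal_mono hα_top hα
    refine ⟨fun n => n + 2, fun n => ⌊c * (n + 2 : ℕ)⌋₊, fun n => by simp,
      fun n => Nat.le_floor (le_mul_of_one_le_left (by positivity) hc), ?_⟩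
    have hratio : ∀ n : ℕ, (⌊c * (n + 2 : ℕ)⌋₊ : ℝ≥0∞) / (n + 2 : ℕ) =
        ENNReal.ofReal (⌊c * (n + 2 : ℕ)⌋₊ / (n + 2 : ℕ)) := fun n => by
      rw [ENNReal.ofReal_div_of_pos (by positivity), ENNReal.ofReal_natCast,
        ENNReal.ofReal_natCast]
    simp only [hratio]
    rw [← ENNReal.ofReal_toReal hα_top]
    refine le_antisymm (iSup_le fun n => ENNReal.ofReal_le_ofReal ?_) ?_
    · rw [div_le_iff₀ (by positivity)]
      exact Nat.floor_le (by positivity)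
    · have hlim : Tendsto (fun n : ℕ => (⌊c * (n + 2 : ℕ)⌋₊ : ℝ) / (n + 2 : ℕ)) atTop (𝓝 c) :=
        (tendsto_nat_floor_mul_div_atTop (by positivity)).comp
          (tendsto_natCast_atTop_atTop.comp (tendsto_add_atTop_nat 2))
      exact le_of_tendsto' (ENNReal.tendsto_ofReal hlim) fun n => le_iSup (fun n : ℕ =>
        ENNReal.ofReal ((⌊c * (n + 2 : ℕ)⌋₊ : ℝ) / (n + 2 : ℕ))) n

/-- For every extended nonnegative real `α ≥ 1` (including `α = ∞`),
there exists a factorizable Boolean sublattice whose elasticity equals `α`. -/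
theorem stmt_16 (α : ℝ≥0∞) (hα : 1 ≤ α) :
    ∃ S : Set (Finset ℕ), IsBSL S ∧ Factorizable S ∧ elasticity S = α := by
  obtain ⟨a, b, ha, hab, hβ⟩ := exists_iSup_div_eq hα
  exact ⟨gridLattice a b, isBSL_finiteUnions _,
    factorizable_gridLattice ha fun n => (ha n).trans (hab n),
    (elasticity_gridLattice ha hab).trans hβ⟩
end

section
/- Let S be a factorizable Boolean sublattice. Then S is an LFS if and only if the Boolean sublattice ⟨A(S) \ A_I(S)⟩ generated by the non-isolated quarks of S is an LFS. -/
open scoped ENNReal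

/-! The quarks of `⟨A(S) \ A_I(S)⟩ ⊆ S` are exactly the non-isolated quarks of `S`, so its
factorizations are factorizations in `S`. Conversely, isolated quarks are forced: an isolated
quark lies in a factorization of `X` exactly when it is contained in `X`. So two factorizations
of `X` share their isolated quarks, and their non-isolated parts are factorizations, in
`⟨A(S) \ A_I(S)⟩`, of the same element: `X` minus the union of the isolated quarks. -/

open Finset

theorem IsBSL.finset_sup_mem {T : Set (Finset ℕ)} (hT : IsBSL T) (t : Finset (Finset ℕ))
    (h : ∀ A ∈ t, A ∈ T) : t.sup id ∈ T := by
  classical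
  induction t using Finset.induction_on with
  | empty => exact hT.1
  | insert B t _ ih =>
    rw [sup_insert]
    exact hT.2 _ (h B (mem_insert_self B t)) _ (ih fun A hA => h A (mem_insert_of_mem hA))

section genBSL

variable {𝒜 : Set (Finset ℕ)}

theorem isBSL_genBSL (𝒜 : Set (Finset ℕ)) : IsBSL (genBSL 𝒜) :=
  ⟨Set.mem_sInter.2 fun _ hT => hT.1.1, fun _ hA _ hB => Set.mem_sInter.2 fun T hT =>
    hT.1.2 _ (Set.mem_sInter.1 hA T hT) _ (Set.mem_sInter.1 hB T hT)⟩

theorem subset_genBSL (𝒜 : Set (Finset ℕ)) : 𝒜 ⊆ genBSL 𝒜 :=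
  fun _ hA => Set.mem_sInter.2 fun _ hT => hT.2 hA

theorem genBSL_subset {T : Set (Finset ℕ)} (hT : IsBSL T) (h : 𝒜 ⊆ T) : genBSL 𝒜 ⊆ T :=
  fun _ hX => Set.mem_sInter.1 hX T ⟨hT, h⟩

theorem exists_mem_subset_of_mem_genBSL {X : Finset ℕ} (hX : X ∈ genBSL 𝒜) (hX₀ : X ≠ ∅) :
    ∃ B ∈ 𝒜, B ≠ ∅ ∧ B ⊆ X := by
  refine genBSL_subset (T := {X | X ≠ ∅ → ∃ B ∈ 𝒜, B ≠ ∅ ∧ B ⊆ X}) ⟨fun h => (h rfl).elim, ?_⟩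
    (fun A hA hA₀ => ⟨A, hA, hA₀, subset_rfl⟩) hX hX₀
  intro A hA B hB hAB
  by_cases hA₀ : A = ∅
  · subst hA₀
    simpa using hB (by simpa using hAB)
  · obtain ⟨C, hC, hC₀, hCA⟩ := hA hA₀
    exact ⟨C, hC, hC₀, hCA.trans subset_union_left⟩

theorem isQuark_genBSL_iff {A : Finset ℕ} : IsQuark (genBSL 𝒜) A ↔ IsQuark 𝒜 A := by
  constructor
  · rintro ⟨hA, hA₀, hmin⟩
    obtain ⟨B, hB, hB₀, hBA⟩ := exists_mem_subset_of_mem_genBSL hA hA₀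
    obtain rfl : B = A := by
      by_contra hne
      exact hmin B (subset_genBSL 𝒜 hB) hB₀ (ssubset_of_subset_of_ne hBA hne)
    exact ⟨hB, hB₀, fun C hC => hmin C (subset_genBSL 𝒜 hC)⟩
  · rintro ⟨hA, hA₀, hmin⟩
    refine ⟨subset_genBSL 𝒜 hA, hA₀, fun B hB hB₀ hBA => ?_⟩
    obtain ⟨C, hC, hC₀, hCB⟩ := exists_mem_subset_of_mem_genBSL hB hB₀
    exact hmin C hC hC₀ (hCB.trans_ssubset hBA)

end genBSL

theorem isQuark_iff_mem_of_forall_isQuark {S 𝒜 : Set (Finset ℕ)} (h : ∀ B ∈ 𝒜, IsQuark S B)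
    {A : Finset ℕ} : IsQuark 𝒜 A ↔ A ∈ 𝒜 :=
  ⟨fun hA => hA.1, fun hA => ⟨hA, (h A hA).2.1, fun B hB => (h A hA).2.2 B (h B hB).1⟩⟩

namespace IsFactorization

variable {S : Set (Finset ℕ)} {X : Finset ℕ} {z : Finset (Finset ℕ)}

theorem subset_of_mem (hz : IsFactorization S X z) {A : Finset ℕ} (hA : A ∈ z) : A ⊆ X :=
  hz.2.1 ▸ le_sup (f := id) hA

theorem eq_empty_of_eq_empty (hz : IsFactorization S X z) (hX : X = ∅) : z = ∅ :=
  eq_empty_of_forall_notMem fun A hA =>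
    (hz.1 A hA).2.1 (subset_empty.1 (hX ▸ hz.subset_of_mem hA))

theorem mem_of_isBSL (hS : IsBSL S) (hz : IsFactorization S X z) : X ∈ S :=
  hz.2.1 ▸ hS.finset_sup_mem z fun A hA => (hz.1 A hA).1

theorem of_isQuark_imp {T : Set (Finset ℕ)} (hTS : ∀ A, IsQuark T A → IsQuark S A)
    (hz : IsFactorization T X z) : IsFactorization S X z :=
  ⟨fun A hA => hTS A (hz.1 A hA), hz.2⟩

/-- If `u ⊊ z.filter p` had the same union, `u ∪ z.filter (¬ p)` would be a smaller
factorization of `X`. -/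
theorem filter {T : Set (Finset ℕ)} (hz : IsFactorization S X z) (p : Finset ℕ → Prop)
    [DecidablePred p] (hp : ∀ A ∈ z, p A → IsQuark T A) :
    IsFactorization T ((z.filter p).sup id) (z.filter p) := by
  refine ⟨fun A hA => hp A (mem_filter.1 hA).1 (mem_filter.1 hA).2, rfl, fun u hu hsup => ?_⟩
  obtain ⟨B, hBp, hBu⟩ := exists_of_ssubset hu
  refine hz.2.2 (u ∪ z.filter (fun A => ¬ p A)) ⟨fun A hA => ?_, fun hzu => ?_⟩ ?_
  · rcases mem_union.1 hA with hA | hA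
    · exact (mem_filter.1 (hu.1 hA)).1
    · exact (mem_filter.1 hA).1
  · rcases mem_union.1 (hzu (mem_filter.1 hBp).1) with hB | hB
    · exact hBu hB
    · exact (mem_filter.1 hB).2 (mem_filter.1 hBp).2
  · rw [sup_union, hsup, ← sup_union, filter_union_filter_not_eq, hz.2.1]

theorem mem_iff_subset_of_isIsolatedQuark (hz : IsFactorization S X z) {A : Finset ℕ}
    (hA : IsIsolatedQuark S A) : A ∈ z ↔ A ⊆ X := by
  refine ⟨hz.subset_of_mem, fun hAX => ?_⟩
  obtain ⟨a, ha⟩ := nonempty_iff_ne_empty.2 hA.1.2.1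
  obtain ⟨B, hBz, haB⟩ := mem_sup.1 (hz.2.1.symm ▸ hAX ha : a ∈ z.sup id)
  by_contra hAz
  exact disjoint_left.1 (hA.2 B (hz.1 B hBz) fun h => hAz (h ▸ hBz)) ha haB

theorem filter_isIsolatedQuark_eq [DecidablePred (IsIsolatedQuark S)] {z' : Finset (Finset ℕ)}
    (hz : IsFactorization S X z) (hz' : IsFactorization S X z') :
    z.filter (IsIsolatedQuark S) = z'.filter (IsIsolatedQuark S) := by
  ext A
  simp only [mem_filter]
  exact and_congr_left fun hI =>
    (hz.mem_iff_subset_of_isIsolatedQuark hI).trans (hz'.mem_iff_subset_of_isIsolatedQuark hI).symm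

theorem sup_filter_not_isIsolatedQuark [DecidablePred (IsIsolatedQuark S)]
    (hz : IsFactorization S X z) :
    (z.filter (fun A => ¬ IsIsolatedQuark S A)).sup id =
      X \ (z.filter (IsIsolatedQuark S)).sup id := by
  have hdisj : Disjoint ((z.filter (fun A => ¬ IsIsolatedQuark S A)).sup id)
      ((z.filter (IsIsolatedQuark S)).sup id) := by
    refine Finset.disjoint_sup_left.2 fun B hB => Finset.disjoint_sup_right.2 fun A hA => ?_
    rw [mem_filter] at hA hB
    exact (hA.2.2 B (hz.1 B hB.1) fun h => hB.2 (h ▸ hA.2)).symm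
  have hunion := hz.2.1
  rw [← filter_union_filter_not_eq (IsIsolatedQuark S) z, union_comm, sup_union] at hunion
  rw [← hunion]
  exact (union_sdiff_cancel_right hdisj).symm

end IsFactorization

theorem IsLFS.of_subset {S T : Set (Finset ℕ)} (hTS : T ⊆ S)
    (hq : ∀ A, IsQuark T A → IsQuark S A) (h : IsLFS S) : IsLFS T :=
  fun X hX hX₀ z hz z' hz' hcard =>
    h X (hTS hX) hX₀ z (hz.of_isQuark_imp hq) z' (hz'.of_isQuark_imp hq) hcard

theorem IsLFS.eq_of_card_eq {T : Set (Finset ℕ)} (hT : IsBSL T) (h : IsLFS T) {X : Finset ℕ}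
    {z z' : Finset (Finset ℕ)} (hz : IsFactorization T X z) (hz' : IsFactorization T X z')
    (hcard : z.card = z'.card) : z = z' := by
  by_cases hX : X = ∅
  · rw [hz.eq_empty_of_eq_empty hX, hz'.eq_empty_of_eq_empty hX]
  · exact h X (hz.mem_of_isBSL hT) hX z hz z' hz' hcard

section nonIsolated

variable {S : Set (Finset ℕ)}

def nonIsolatedQuarks (S : Set (Finset ℕ)) : Set (Finset ℕ) :=
  {A | IsQuark S A ∧ ¬ IsIsolatedQuark S A}

theorem isQuark_genBSL_nonIsolatedQuarks_iff {A : Finset ℕ} :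
    IsQuark (genBSL (nonIsolatedQuarks S)) A ↔ IsQuark S A ∧ ¬ IsIsolatedQuark S A :=
  isQuark_genBSL_iff.trans (isQuark_iff_mem_of_forall_isQuark fun _ hB => hB.1)

theorem isLFS_of_isLFS_genBSL_nonIsolatedQuarks (h : IsLFS (genBSL (nonIsolatedQuarks S))) :
    IsLFS S := by
  classical
  intro X _ _ z hz z' hz' hcard
  have hI := IsFactorization.filter_isIsolatedQuark_eq hz hz'
  have hN : ∀ {w}, IsFactorization S X w → IsFactorization (genBSL (nonIsolatedQuarks S))
      (X \ (w.filter (IsIsolatedQuark S)).sup id) (w.filter fun A => ¬ IsIsolatedQuark S A) :=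
    fun hw => hw.sup_filter_not_isIsolatedQuark ▸ hw.filter _
      fun A hA hA' => isQuark_genBSL_nonIsolatedQuarks_iff.2 ⟨hw.1 A hA, hA'⟩
  have hcardN : (z.filter fun A => ¬ IsIsolatedQuark S A).card =
      (z'.filter fun A => ¬ IsIsolatedQuark S A).card := by
    have hsplit := card_filter_add_card_filter_not (s := z) (IsIsolatedQuark S)
    have hsplit' := card_filter_add_card_filter_not (s := z') (IsIsolatedQuark S)
    rw [hI] at hsplit
    omega
  have hNeq := h.eq_of_card_eq (isBSL_genBSL _) (hN hz) (hI ▸ hN hz') hcardN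
  rw [← filter_union_filter_not_eq (IsIsolatedQuark S) z,
    ← filter_union_filter_not_eq (IsIsolatedQuark S) z', hI, hNeq]

end nonIsolated

theorem stmt_17_general (S : Set (Finset ℕ)) (hS : IsBSL S) :
    IsLFS S ↔ IsLFS (genBSL {A | IsQuark S A ∧ ¬ IsIsolatedQuark S A}) :=
  ⟨IsLFS.of_subset (genBSL_subset hS fun _ hA => hA.1.1)
    fun _ hA => (isQuark_genBSL_nonIsolatedQuarks_iff.1 hA).1,
    isLFS_of_isLFS_genBSL_nonIsolatedQuarks⟩

/-- A factorizable Boolean sublattice `S` is an LFS iff the Boolean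
sublattice generated by its non-isolated quarks is an LFS. -/
theorem stmt_17 (S : Set (Finset ℕ)) (hS : IsBSL S) (hfac : Factorizable S) :
    IsLFS S ↔ IsLFS (genBSL {A | IsQuark S A ∧ ¬ IsIsolatedQuark S A}) :=
  stmt_17_general S hS
end
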